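/- Let V(T) be the at-the-money price V(T) = (σ₋²σ₊²/(4(σ₋²−σ₊²)))·(I(σ₊,T) − I(σ₋,T)) where I(x,T) = (√(8T)/(x√π)) e^{−x²T/8} + (4/x² + T) Erf(x√T/√8), and define σ_atm(T) = (√8/√T)·Erf⁻¹(V(T)). Then σ_atm(T) → 2σ₋σ₊/(σ₋+σ₊) as T → 0⁺, and more precisely σ_atm(T) = 2σ₋σ₊/(σ₋+σ₊) − [(σ₋σ₊)²(σ₋−σ₊)²/(12(σ₋+σ₊)³)]·T + o(T) as T → 0⁺. -/

import Mathlib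

open Real Filter Topology Asymptotics intervalIntegral

noncomputable def Erf (x : ℝ) : ℝ := 2 / Real.sqrt π * ∫ t in (0 : ℝ)..x, Real.exp (-t ^ 2)

lemma exp_neg_sq_le (t : ℝ) : Real.exp (-t^2) ≤ 1 - t^2 + t^4 := by
  have h1 : t^2 + 1 ≤ Real.exp (t^2) := Real.add_one_le_exp _
  have h2 : Real.exp (-t^2) = 1 / Real.exp (t^2) := by
    rw [Real.exp_neg]; ring
  have h3 : (0:ℝ) < Real.exp (t^2) := Real.exp_pos _
  rw [h2, div_le_iff₀ h3]
  have h4 : (0:ℝ) ≤ 1 - t^2 + t^4 := by nlinarith [sq_nonneg (t^2 - 1)]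
  nlinarith [mul_le_mul_of_nonneg_left h1 h4, sq_nonneg (t^3)]

lemma le_exp_neg_sq (t : ℝ) : 1 - t^2 ≤ Real.exp (-t^2) := by
  have := Real.add_one_le_exp (-t^2)
  linarith

lemma intInt (a b : ℝ) : IntervalIntegrable (fun t => Real.exp (-t^2)) MeasureTheory.volume a b :=
  (Real.continuous_exp.comp (by continuity)).intervalIntegrable a b

lemma integral_bounds (u : ℝ) (hu : 0 ≤ u) :
    u - u^3/3 ≤ (∫ t in (0:ℝ)..u, Real.exp (-t^2)) ∧
    (∫ t in (0:ℝ)..u, Real.exp (-t^2)) ≤ u - u^3/3 + u^5/5 := by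
  constructor
  · have h : (∫ t in (0:ℝ)..u, (1 - t^2)) ≤ ∫ t in (0:ℝ)..u, Real.exp (-t^2) := by
      apply intervalIntegral.integral_mono_on hu (by apply IntervalIntegrable.sub <;> [skip; skip] <;> exact (by continuity : Continuous _).intervalIntegrable _ _) (intInt 0 u)
      intro t _; exact le_exp_neg_sq t
    calc u - u^3/3 = ∫ t in (0:ℝ)..u, (1 - t^2) := by
          rw [intervalIntegral.integral_sub ((by continuity : Continuous (fun _ : ℝ => (1:ℝ))).intervalIntegrable _ _) ((by continuity : Continuous (fun t : ℝ => t^2)).intervalIntegrable _ _)]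
          simp [integral_pow]
          ring
      _ ≤ _ := h
  · have h : (∫ t in (0:ℝ)..u, Real.exp (-t^2)) ≤ ∫ t in (0:ℝ)..u, (1 - t^2 + t^4) := by
      apply intervalIntegral.integral_mono_on hu (intInt 0 u) ((by continuity : Continuous (fun t : ℝ => 1 - t^2 + t^4)).intervalIntegrable _ _)
      intro t _; exact exp_neg_sq_le t
    calc (∫ t in (0:ℝ)..u, Real.exp (-t^2)) ≤ _ := h
      _ = u - u^3/3 + u^5/5 := by
          rw [intervalIntegral.integral_add (((by continuity : Continuous (fun _ : ℝ => (1:ℝ))).intervalIntegrable _ _).sub ((by continuity : Continuous (fun t : ℝ => t^2)).intervalIntegrable _ _)) ((by continuity : Continuous (fun t : ℝ => t^4)).intervalIntegrable _ _),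
             intervalIntegral.integral_sub ((by continuity : Continuous (fun _ : ℝ => (1:ℝ))).intervalIntegrable _ _) ((by continuity : Continuous (fun t : ℝ => t^2)).intervalIntegrable _ _)]
          simp [integral_pow]
          ring
lemma sqrt_pi_pos : (0:ℝ) < Real.sqrt π := Real.sqrt_pos.2 Real.pi_pos

lemma Erf_zero : Erf 0 = 0 := by simp [Erf]

lemma Erf_strictMono : StrictMono Erf := by
  intro a b hab
  unfold Erf
  have key : (∫ t in a..b, Real.exp (-t^2)) > 0 :=
    intervalIntegral.intervalIntegral_pos_of_pos (intInt a b) (fun t => Real.exp_pos _) hab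
  have split : (∫ t in (0:ℝ)..b, Real.exp (-t^2)) = (∫ t in (0:ℝ)..a, Real.exp (-t^2)) + ∫ t in a..b, Real.exp (-t^2) :=
    (intervalIntegral.integral_add_adjacent_intervals (intInt 0 a) (intInt a b)).symm
  have hc : (0:ℝ) < 2 / Real.sqrt π := by positivity
  calc 2 / Real.sqrt π * ∫ t in (0:ℝ)..a, Real.exp (-t^2)
      < 2 / Real.sqrt π * ((∫ t in (0:ℝ)..a, Real.exp (-t^2)) + ∫ t in a..b, Real.exp (-t^2)) := by
        apply mul_lt_mul_of_pos_left (by linarith) hc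
    _ = 2 / Real.sqrt π * ∫ t in (0:ℝ)..b, Real.exp (-t^2) := by rw [split]

lemma Erf_continuous : Continuous Erf := by
  unfold Erf
  apply Continuous.mul continuous_const
  exact intervalIntegral.continuous_primitive intInt 0

lemma Erf_injective : Function.Injective Erf := Erf_strictMono.injective

lemma Erf_invFun_eq {y : ℝ} (h : y ∈ Set.range Erf) : Erf (Function.invFun Erf y) = y :=
  Function.invFun_eq h

lemma mem_range_Erf {y : ℝ} (h1 : Erf (-1) ≤ y) (h2 : y ≤ Erf 1) : y ∈ Set.range Erf := by
  have := intermediate_value_Icc (by norm_num : (-1:ℝ) ≤ 1) Erf_continuous.continuousOn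
  obtain ⟨x, _, hx⟩ := this ⟨h1, h2⟩
  exact ⟨x, hx⟩
lemma master (x u r E G : ℝ) (hx : 0 < x) (hr : 0 < r) (hu : 0 < u) (hu1 : u ≤ 1)
    (hE1 : 1 - x^2*u^2 ≤ E) (hE2 : E ≤ 1 - x^2*u^2 + x^4*u^4)
    (hG1 : 2/r*(x*u - (x*u)^3/3) ≤ G) (hG2 : G ≤ 2/r*(x*u - (x*u)^3/3 + (x*u)^5/5)) :
    |8*u/(x*r)*E + (4/x^2 + 8*u^2)*G - (16*u/(r*x) + 16*x*u^3/(3*r))|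
      ≤ (16*x^3/(3*r) + 8*x^3/r + (4/x^2+8)*(2*x^5/(5*r))) * u^5 := by
  have hxne : x ≠ 0 := ne_of_gt hx
  have hrne : r ≠ 0 := ne_of_gt hr
  have hid : 8*u/(x*r)*(1 - x^2*u^2) + (4/x^2 + 8*u^2)*(2/r*(x*u - (x*u)^3/3))
      - (16*u/(r*x) + 16*x*u^3/(3*r)) = -(16*x^3*u^5)/(3*r) := by
    field_simp
    ring
  have hxr : (0:ℝ) < 8*u/(x*r) := by positivity
  have hc2 : (0:ℝ) < 4/x^2 + 8*u^2 := by positivity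
  have l1 : 8*u/(x*r)*(1 - x^2*u^2) ≤ 8*u/(x*r)*E := mul_le_mul_of_nonneg_left hE1 hxr.le
  have l2 : 8*u/(x*r)*E ≤ 8*u/(x*r)*(1 - x^2*u^2) + 8*x^3*u^5/r := by
    have := mul_le_mul_of_nonneg_left hE2 hxr.le
    have e2 : 8*u/(x*r)*(1 - x^2*u^2 + x^4*u^4) = 8*u/(x*r)*(1 - x^2*u^2) + 8*x^3*u^5/r := by
      field_simp
    linarith [e2 ▸ this]
  have l3 : (4/x^2 + 8*u^2)*(2/r*(x*u - (x*u)^3/3)) ≤ (4/x^2 + 8*u^2)*G :=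
    mul_le_mul_of_nonneg_left hG1 hc2.le
  have l4 : (4/x^2 + 8*u^2)*G ≤ (4/x^2 + 8*u^2)*(2/r*(x*u - (x*u)^3/3)) + (4/x^2+8)*(2*x^5/(5*r))*u^5 := by
    have h1 := mul_le_mul_of_nonneg_left hG2 hc2.le
    have e4 : (4/x^2 + 8*u^2)*(2/r*(x*u - (x*u)^3/3 + (x*u)^5/5))
        = (4/x^2 + 8*u^2)*(2/r*(x*u - (x*u)^3/3)) + (4/x^2 + 8*u^2)*(2/r*((x*u)^5/5)) := by
      ring
    have e5 : (4/x^2 + 8*u^2)*(2/r*((x*u)^5/5)) ≤ (4/x^2+8)*(2*x^5/(5*r))*u^5 := by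
      have hb1 : (4/x^2 + 8*u^2) ≤ 4/x^2 + 8 := by nlinarith
      have hb2 : (0:ℝ) ≤ 2/r*((x*u)^5/5) := by positivity
      have hb3 : (2/r*((x*u)^5/5)) = (2*x^5/(5*r))*u^5 := by field_simp
      calc (4/x^2 + 8*u^2)*(2/r*((x*u)^5/5)) ≤ (4/x^2 + 8)*(2/r*((x*u)^5/5)) :=
            mul_le_mul_of_nonneg_right hb1 hb2
        _ = (4/x^2+8)*(2*x^5/(5*r))*u^5 := by rw [hb3]; ring
    linarith [e4 ▸ h1]
  have p1 : (0:ℝ) ≤ 8*x^3/r*u^5 := by positivity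
  have p2 : (0:ℝ) ≤ (4/x^2+8)*(2*x^5/(5*r))*u^5 := by positivity
  have p3 : (0:ℝ) ≤ 16*x^3/(3*r)*u^5 := by positivity
  have hK : (16*x^3/(3*r) + 8*x^3/r + (4/x^2+8)*(2*x^5/(5*r))) * u^5
      = 16*x^3/(3*r)*u^5 + 8*x^3/r*u^5 + (4/x^2+8)*(2*x^5/(5*r))*u^5 := by ring
  have hid2 : -(16*x^3*u^5)/(3*r) = -(16*x^3/(3*r)*u^5) := by ring
  have e6 : 8*x^3*u^5/r = 8*x^3/r*u^5 := by ring
  rw [abs_le, hK]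
  rw [hid2] at hid
  rw [e6] at l2
  constructor
  · linarith
  · linarith

lemma Erf_bounds (u : ℝ) (hu : 0 ≤ u) :
    2/Real.sqrt π*(u - u^3/3) ≤ Erf u ∧ Erf u ≤ 2/Real.sqrt π*(u - u^3/3 + u^5/5) := by
  have hc : (0:ℝ) ≤ 2 / Real.sqrt π := by positivity
  obtain ⟨h1, h2⟩ := integral_bounds u hu
  exact ⟨mul_le_mul_of_nonneg_left h1 hc, mul_le_mul_of_nonneg_left h2 hc⟩

noncomputable def Ifun (x T : ℝ) : ℝ :=
  Real.sqrt (8 * T) / (x * Real.sqrt π) * Real.exp (-x ^ 2 * T / 8)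
    + (4 / x ^ 2 + T) * Erf (x * Real.sqrt T / Real.sqrt 8)

noncomputable def A1 (x : ℝ) : ℝ := 2 * Real.sqrt 8 / (Real.sqrt π * x)
noncomputable def A3 (x : ℝ) : ℝ := 2 * x / (3 * Real.sqrt 8 * Real.sqrt π)

lemma Ifun_bound (x : ℝ) (hx : 0 < x) : ∃ K : ℝ, 0 ≤ K ∧ ∀ s ∈ Set.Ioc (0:ℝ) 1,
    |Ifun x (s^2) - (A1 x * s + A3 x * s^3)| ≤ K * s^5 := by
  set q := Real.sqrt 8 with hqdef
  set r := Real.sqrt π with hrdef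
  have hq2 : q^2 = 8 := Real.sq_sqrt (by norm_num)
  have hqpos : 0 < q := Real.sqrt_pos.2 (by norm_num)
  have hrpos : 0 < r := sqrt_pi_pos
  refine ⟨(16*x^3/(3*r) + 8*x^3/r + (4/x^2+8)*(2*x^5/(5*r))) / q^5, by positivity, ?_⟩
  rintro s ⟨hs0, hs1⟩
  set u := s / q with hudef
  have hupos : 0 < u := by positivity
  have hs : s = q * u := by rw [hudef]; field_simp
  have hu1 : u ≤ 1 := by
    rw [hudef, div_le_one hqpos]
    calc s ≤ 1 := hs1
      _ ≤ q := by nlinarith [hq2, hqpos]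
  have hsqrt8s : Real.sqrt (8 * s^2) = q * s := by
    rw [Real.sqrt_mul (by norm_num : (0:ℝ) ≤ 8), Real.sqrt_sq hs0.le]
  have hsqrts : Real.sqrt (s^2) = s := Real.sqrt_sq hs0.le
  have hqs : q * s = 8 * u := by rw [hs]; linear_combination u * hq2
  have hs2 : s^2 = 8 * u^2 := by rw [hs]; linear_combination u^2 * hq2
  have harg : x * s / q = x * u := by rw [hs]; field_simp
  have hIfun : Ifun x (s^2) = 8*u/(x*r) * Real.exp (-x^2*u^2) + (4/x^2 + 8*u^2) * Erf (x*u) := by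
    rw [Ifun, hsqrt8s, hsqrts, harg, hqs, hs2]
    have e1 : -x ^ 2 * (8*u^2) / 8 = -x^2*u^2 := by ring
    rw [e1]
  have hqne : q ≠ 0 := hqpos.ne'
  have hA1 : A1 x * s = 16*u/(r*x) := by
    have h1 : A1 x * s = 2*q^2*u/(r*x) := by rw [A1, ← hqdef, ← hrdef, hs]; ring
    rw [h1, hq2]; ring
  have hA3 : A3 x * s^3 = 16*x*u^3/(3*r) := by
    have h1 : A3 x * s^3 = 2*x*u^3/(3*r)*(q^3/q) := by rw [A3, ← hqdef, ← hrdef, hs]; ring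
    have h2 : q^3/q = q^2 := by field_simp [hqne]
    rw [h1, h2, hq2]; ring
  have hmain : A1 x * s + A3 x * s^3 = 16*u/(r*x) + 16*x*u^3/(3*r) := by rw [hA1, hA3]
  have hs5 : s^5 = q^5 * u^5 := by rw [hs]; ring
  have hexpL := le_exp_neg_sq (x*u)
  have hexpU := exp_neg_sq_le (x*u)
  have hexpL' : 1 - x^2*u^2 ≤ Real.exp (-x^2*u^2) := by
    have e : -(x*u)^2 = -x^2*u^2 := by ring
    rw [e] at hexpL; nlinarith [hexpL]
  have hexpU' : Real.exp (-x^2*u^2) ≤ 1 - x^2*u^2 + x^4*u^4 := by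
    have e : -(x*u)^2 = -x^2*u^2 := by ring
    rw [e] at hexpU; nlinarith [hexpU]
  obtain ⟨hG1, hG2⟩ := Erf_bounds (x*u) (by positivity)
  rw [← hrdef] at hG1 hG2
  have key := master x u r (Real.exp (-x^2*u^2)) (Erf (x*u)) hx hrpos hupos hu1 hexpL' hexpU' hG1 hG2
  rw [hIfun, hmain]
  calc |8*u/(x*r) * Real.exp (-x^2*u^2) + (4/x^2 + 8*u^2) * Erf (x*u) - (16*u/(r*x) + 16*x*u^3/(3*r))|
      ≤ (16*x^3/(3*r) + 8*x^3/r + (4/x^2+8)*(2*x^5/(5*r))) * u^5 := key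
    _ = (16*x^3/(3*r) + 8*x^3/r + (4/x^2+8)*(2*x^5/(5*r))) / q^5 * s^5 := by
        rw [hs5, ← mul_assoc, div_mul_cancel₀ _ (pow_ne_zero 5 hqne)]

noncomputable def Vatm (σp σm T : ℝ) : ℝ :=
  σm ^ 2 * σp ^ 2 / (4 * (σm ^ 2 - σp ^ 2)) * (Ifun σp T - Ifun σm T)

noncomputable def sigAtm (σp σm T : ℝ) : ℝ :=
  Real.sqrt 8 / Real.sqrt T * Function.invFun Erf (Vatm σp σm T)

noncomputable def Mfac (σp σm : ℝ) : ℝ := σm^2*σp^2/(4*(σm^2-σp^2))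

lemma Vatm_bound (σp σm : ℝ) (hp : 0 < σp) (hm : 0 < σm) :
    ∃ K : ℝ, 0 ≤ K ∧ ∀ s ∈ Set.Ioc (0:ℝ) 1,
      |Vatm σp σm (s^2) - (Mfac σp σm * (A1 σp - A1 σm) * s + Mfac σp σm * (A3 σp - A3 σm) * s^3)|
        ≤ K * s^5 := by
  obtain ⟨Kp, hKp0, hKp⟩ := Ifun_bound σp hp
  obtain ⟨Km, hKm0, hKm⟩ := Ifun_bound σm hm
  refine ⟨|Mfac σp σm| * (Kp + Km), by positivity, ?_⟩
  intro s hs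
  have e : Vatm σp σm (s^2)
      - (Mfac σp σm * (A1 σp - A1 σm) * s + Mfac σp σm * (A3 σp - A3 σm) * s^3)
      = Mfac σp σm * ((Ifun σp (s^2) - (A1 σp * s + A3 σp * s^3))
        - (Ifun σm (s^2) - (A1 σm * s + A3 σm * s^3))) := by
    rw [Vatm, Mfac]; ring
  rw [e, abs_mul]
  have h1 := hKp s hs
  have h2 := hKm s hs
  have h3 : |(Ifun σp (s^2) - (A1 σp * s + A3 σp * s^3))
      - (Ifun σm (s^2) - (A1 σm * s + A3 σm * s^3))| ≤ (Kp + Km) * s^5 := by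
    calc |(Ifun σp (s^2) - (A1 σp * s + A3 σp * s^3))
        - (Ifun σm (s^2) - (A1 σm * s + A3 σm * s^3))|
        ≤ |Ifun σp (s^2) - (A1 σp * s + A3 σp * s^3)|
          + |Ifun σm (s^2) - (A1 σm * s + A3 σm * s^3)| := abs_sub _ _
      _ ≤ Kp * s^5 + Km * s^5 := add_le_add h1 h2
      _ = (Kp + Km) * s^5 := by ring
  calc |Mfac σp σm| * |(Ifun σp (s^2) - (A1 σp * s + A3 σp * s^3))
      - (Ifun σm (s^2) - (A1 σm * s + A3 σm * s^3))|
      ≤ |Mfac σp σm| * ((Kp + Km) * s^5) := mul_le_mul_of_nonneg_left h3 (abs_nonneg _)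
    _ = |Mfac σp σm| * (Kp + Km) * s^5 := by ring

lemma b1_closed (σp σm : ℝ) (hp : 0 < σp) (hm : 0 < σm) (hne : σp ≠ σm) :
    Mfac σp σm * (A1 σp - A1 σm) = Real.sqrt 8 * (σm*σp) / (2*Real.sqrt π*(σm+σp)) := by
  have hsum : (0:ℝ) < σm + σp := by linarith
  have hd : σm^2 - σp^2 ≠ 0 := by
    intro h
    have h2 : (σm - σp) * (σm + σp) = 0 := by linear_combination h
    rcases mul_eq_zero.mp h2 with h3 | h3
    · exact hne (by linarith)
    · linarith
  rw [Mfac, A1, A1]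
  field_simp
  ring

lemma b3_closed (σp σm : ℝ) (hp : 0 < σp) (hm : 0 < σm) (hne : σp ≠ σm) :
    Mfac σp σm * (A3 σp - A3 σm)
      = -(σm^2*σp^2) / (6*Real.sqrt 8*Real.sqrt π*(σm+σp)) := by
  have hsum : (0:ℝ) < σm + σp := by linarith
  have hd : σm^2 - σp^2 ≠ 0 := by
    intro h
    have h2 : (σm - σp) * (σm + σp) = 0 := by linear_combination h
    rcases mul_eq_zero.mp h2 with h3 | h3
    · exact hne (by linarith)
    · linarith
  have hq : (0:ℝ) < Real.sqrt 8 := Real.sqrt_pos.2 (by norm_num)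
  have hr : (0:ℝ) < Real.sqrt π := sqrt_pi_pos
  rw [Mfac, A3, A3]
  field_simp
  ring

set_option maxHeartbeats 2000000 in
theorem stmt18 (σp σm : ℝ) (hp : 0 < σp) (hm : 0 < σm) (hne : σp ≠ σm) :
    Tendsto (sigAtm σp σm) (𝓝[>] 0) (𝓝 (2 * σm * σp / (σm + σp))) ∧
    (fun T : ℝ => sigAtm σp σm T -
        (2 * σm * σp / (σm + σp)
          - (σm * σp) ^ 2 * (σm - σp) ^ 2 / (12 * (σm + σp) ^ 3) * T))
      =o[𝓝[>] 0] fun T : ℝ => T := by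
  have hq2 : Real.sqrt 8 ^ 2 = 8 := Real.sq_sqrt (by norm_num)
  have hqpos : 0 < Real.sqrt 8 := Real.sqrt_pos.2 (by norm_num)
  have hrpos : 0 < Real.sqrt π := sqrt_pi_pos
  set q := Real.sqrt 8 with hqdef
  set r := Real.sqrt π with hrdef
  have hsum : (0:ℝ) < σm + σp := by linarith
  obtain ⟨K, hK0, hKb⟩ := Vatm_bound σp σm hp hm
  have hb1 := b1_closed σp σm hp hm hne
  have hb3 := b3_closed σp σm hp hm hne
  rw [← hqdef, ← hrdef] at hb1 hb3
  set b1 := Mfac σp σm * (A1 σp - A1 σm) with hb1def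
  set b3 := Mfac σp σm * (A3 σp - A3 σm) with hb3def
  have hb1pos : 0 < b1 := by rw [hb1]; positivity
  set C : ℝ := b1 + |b3| + K with hCdef
  have hCpos : 0 < C := by have := abs_nonneg b3; rw [hCdef]; linarith
  have hb1C : b1 ≤ C := by have := abs_nonneg b3; rw [hCdef]; linarith
  set e0 : ℝ := (r/2)*b1 with he0def
  set e1 : ℝ := (r/2)*b3 + (r^3/24)*b1^3 with he1def
  set K2 : ℝ := (3*r/4*C)^5 + (r/2)*K + (r^3/24)*(3*C^2*(K + |b3|)) with hK2def
  have hK2pos : 0 ≤ K2 := by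
    rw [hK2def]
    have := abs_nonneg b3
    positivity
  have hErf1 : 0 < Erf 1 := by
    have := Erf_strictMono (show (0:ℝ) < 1 by norm_num)
    rwa [Erf_zero] at this
  have hErfm1 : Erf (-1) < 0 := by
    have := Erf_strictMono (show (-1:ℝ) < 0 by norm_num)
    rwa [Erf_zero] at this
  have hsqrtT : Tendsto (fun T : ℝ => Real.sqrt T) (𝓝[>] 0) (𝓝 0) := by
    have h0 : Tendsto (fun T : ℝ => Real.sqrt T) (𝓝 0) (𝓝 0) := by
      simpa using (Real.continuous_sqrt.tendsto 0)
    exact h0.mono_left nhdsWithin_le_nhds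
  -- the central eventual estimate
  have main_ev : ∀ᶠ T in 𝓝[>] (0:ℝ),
      |sigAtm σp σm T - (q*e0 + q*e1*T)| ≤ q*K2*T^2 := by
    have ev1 : ∀ᶠ T in 𝓝[>] (0:ℝ), Real.sqrt T < Erf 1 / C :=
      hsqrtT.eventually_lt_const (by positivity)
    have ev2 : ∀ᶠ T in 𝓝[>] (0:ℝ), Real.sqrt T < b1 / (2*(|b3| + K + 1)) := by
      apply hsqrtT.eventually_lt_const
      have := abs_nonneg b3
      positivity
    have ev3 : Set.Ioc (0:ℝ) 1 ∈ 𝓝[>] (0:ℝ) :=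
      Ioc_mem_nhdsGT_of_mem (Set.left_mem_Ico.2 zero_lt_one)
    filter_upwards [ev1, ev2, ev3] with T h1 h2 hT
    obtain ⟨hT0, hT1⟩ := hT
    set s := Real.sqrt T with hsdef
    have hs0 : 0 < s := Real.sqrt_pos.2 hT0
    have hs1 : s ≤ 1 := Real.sqrt_le_one.mpr hT1
    have hTs : s^2 = T := Real.sq_sqrt hT0.le
    have hsne : s ≠ 0 := hs0.ne'
    have h3s : s^3 = T*s := by rw [show s^3 = s^2*s from by ring, hTs]
    have h5s : s^5 = T^2*s := by rw [show s^5 = (s^2)^2*s from by ring, hTs]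
    have hVb := hKb s ⟨hs0, hs1⟩
    set v := Vatm σp σm T with hvdef
    have hVb' : |v - (b1*s + b3*(T*s))| ≤ K*(T^2*s) := by
      rw [← h3s, ← h5s, hvdef, ← hTs]
      exact hVb
    have habs := abs_le.mp hVb'
    have tT : T ≤ s := by
      rw [← hTs, sq]
      calc s * s ≤ 1 * s := mul_le_mul_of_nonneg_right hs1 hs0.le
        _ = s := one_mul s
    have t1 : T*s ≤ s := by
      calc T*s ≤ 1*s := mul_le_mul_of_nonneg_right hT1 hs0.le
        _ = s := one_mul s
    have t2 : T^2*s ≤ T*s := by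
      have hTT : T^2 ≤ T := by
        have h := mul_le_mul_of_nonneg_right hT1 hT0.le
        have e : T*T = T^2 := by ring
        linarith
      exact mul_le_mul_of_nonneg_right hTT hs0.le
    have t2' : T^2*s ≤ s := le_trans t2 t1
    -- v upper bound
    have hvC : v ≤ C*s := by
      have a1 : b3*(T*s) ≤ |b3| *(T*s) := mul_le_mul_of_nonneg_right (le_abs_self b3) (by positivity)
      have a2 : |b3| *(T*s) ≤ |b3| *s := mul_le_mul_of_nonneg_left t1 (abs_nonneg b3)
      have a3 : K*(T^2*s) ≤ K*s := mul_le_mul_of_nonneg_left t2' hK0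
      have e : C*s = b1*s + |b3| *s + K*s := by rw [hCdef]; ring
      linarith [habs.2]
    -- v lower bound
    have hvL : b1/2*s ≤ v := by
      have a1 : -(b3*(T*s)) ≤ |b3| *(T*s) := by
        have h := mul_le_mul_of_nonneg_right (neg_le_abs b3) (by positivity : (0:ℝ) ≤ T*s)
        have e : (-b3)*(T*s) = -(b3*(T*s)) := by ring
        linarith [e ▸ h]
      have a2 : (|b3| + K)*(T*s) ≤ b1/2*s := by
        have c0 : T*s ≤ s*s := mul_le_mul_of_nonneg_right tT hs0.le
        have c1 : (|b3| + K)*(T*s) ≤ (|b3| + K + 1)*(s*s) := by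
          have d1 : (|b3| + K)*(T*s) ≤ (|b3| + K)*(s*s) :=
            mul_le_mul_of_nonneg_left c0 (by positivity)
          have d2 : (|b3| + K)*(s*s) ≤ (|b3| + K + 1)*(s*s) :=
            mul_le_mul_of_nonneg_right (by linarith) (by positivity)
          linarith
        have c2 : (|b3| + K + 1)*s ≤ b1/2 := by
          have hpos : (0:ℝ) < 2*(|b3| + K + 1) := by positivity
          rw [lt_div_iff₀ hpos] at h2
          have e : s*(2*(|b3| + K + 1)) = 2*((|b3| + K + 1)*s) := by ring
          linarith
        calc (|b3| + K)*(T*s) ≤ (|b3| + K + 1)*(s*s) := c1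
          _ = ((|b3| + K + 1)*s)*s := by ring
          _ ≤ (b1/2)*s := mul_le_mul_of_nonneg_right c2 hs0.le
      have a3 : K*(T^2*s) ≤ K*(T*s) := mul_le_mul_of_nonneg_left t2 hK0
      have a4 : K*(T*s) + |b3| *(T*s) = (|b3| + K)*(T*s) := by ring
      linarith [habs.1]
    have hv0 : 0 < v := lt_of_lt_of_le (by positivity) hvL
    have hvErf1 : v < Erf 1 := by
      calc v ≤ C*s := hvC
        _ < C*(Erf 1/C) := mul_lt_mul_of_pos_left h1 hCpos
        _ = Erf 1 := by field_simp [hCpos.ne']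
    have hvrange : v ∈ Set.range Erf := mem_range_Erf (by linarith) hvErf1.le
    set w := Function.invFun Erf v with hwdef
    have hEw : Erf w = v := Erf_invFun_eq hvrange
    have hsig : sigAtm σp σm T = q/s * w := rfl
    clear_value s v w q r b1 b3 C e0 e1 K2
    have hw0 : 0 < w := by
      have h := Erf_strictMono.lt_iff_lt (a := 0) (b := w)
      apply h.mp
      rw [hEw, Erf_zero]; exact hv0
    have hw1 : w ≤ 1 := by
      have h := Erf_strictMono.lt_iff_lt (a := w) (b := 1)
      refine (h.mp ?_).le
      rw [hEw]; exact hvErf1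
    obtain ⟨hB1, hB2⟩ := Erf_bounds w hw0.le
    rw [← hrdef, hEw] at hB1 hB2
    have hp53 : w^5 ≤ w^3 := pow_le_pow_of_le_one hw0.le hw1 (by norm_num)
    have hp31 : w^3 ≤ w := by
      have := pow_le_pow_of_le_one hw0.le hw1 (show 1 ≤ 3 by norm_num)
      rwa [pow_one] at this
    have hA_up : w - (r/2)*v - w^3/3 ≤ 0 := by
      have h := mul_le_mul_of_nonneg_left hB1 (by positivity : (0:ℝ) ≤ r/2)
      have e : (r/2)*(2/r*(w - w^3/3)) = w - w^3/3 := by field_simp [hrpos.ne']; try ring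
      rw [e] at h
      linarith
    have hA_lo : -(w^5/5) ≤ w - (r/2)*v - w^3/3 := by
      have h := mul_le_mul_of_nonneg_left hB2 (by positivity : (0:ℝ) ≤ r/2)
      have e : (r/2)*(2/r*(w - w^3/3 + w^5/5)) = w - w^3/3 + w^5/5 := by field_simp [hrpos.ne']; try ring
      rw [e] at h
      linarith
    have hzw : (r/2)*v ≤ w := by linarith [pow_nonneg hw0.le 5, pow_nonneg hw0.le 3]
    have hwz : w ≤ (3*r/4)*v := by
      have inner : 2/r*(2*w/3) ≤ 2/r*(w - w^3/3) := by
        apply mul_le_mul_of_nonneg_left (by linarith) (by positivity)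
      have h := le_trans inner hB1
      have h2 := mul_le_mul_of_nonneg_left h (by positivity : (0:ℝ) ≤ 3*r/4)
      have e : (3*r/4)*(2/r*(2*w/3)) = w := by field_simp [hrpos.ne']; try ring
      rw [e] at h2
      exact h2
    have hwup : w ≤ (3*r/4*C)*s := by
      calc w ≤ (3*r/4)*v := hwz
        _ ≤ (3*r/4)*(C*s) := mul_le_mul_of_nonneg_left hvC (by positivity)
        _ = (3*r/4*C)*s := by ring
    -- cubic inversion estimate
    have hw5 : |w - ((r/2)*v + (r^3/24)*v^3)| ≤ w^5 := by
      have hz0 : (0:ℝ) ≤ (r/2)*v := by positivity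
      have hwz' : 0 ≤ w - (r/2)*v := by linarith
      have h1' : w - (r/2)*v ≤ w^3/3 := by linarith
      have h2' : w^2 + w*((r/2)*v) + ((r/2)*v)^2 ≤ 3*w^2 := by
        have hz1 : w*((r/2)*v) ≤ w^2 := by
          have h := mul_le_mul_of_nonneg_left hzw hw0.le
          have e : w*w = w^2 := by ring
          linarith
        have hz2 : ((r/2)*v)^2 ≤ w^2 := by
          have h := mul_le_mul hzw hzw hz0 hw0.le
          have e : w*w = w^2 := by ring
          have e2 : ((r/2)*v)*((r/2)*v) = ((r/2)*v)^2 := by ring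
          linarith
        linarith
      have h3' : (0:ℝ) ≤ w^2 + w*((r/2)*v) + ((r/2)*v)^2 := by positivity
      have hc : w^3 - ((r/2)*v)^3 ≤ w^5 := by
        calc w^3 - ((r/2)*v)^3 = (w - (r/2)*v)*(w^2 + w*((r/2)*v) + ((r/2)*v)^2) := by ring
          _ ≤ (w^3/3)*(3*w^2) := mul_le_mul h1' h2' h3' (by positivity)
          _ = w^5 := by ring
      have hc0 : 0 ≤ w^3 - ((r/2)*v)^3 := by
        have := pow_le_pow_left₀ hz0 hzw 3
        linarith
      have ez : (r^3/24)*v^3 = ((r/2)*v)^3/3 := by ring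
      rw [ez, abs_le]
      constructor
      · linarith [pow_nonneg hw0.le 5]
      · linarith [pow_nonneg hw0.le 5]
    -- assemble estimate on w vs T
    have hwT : |w - (e0*s + e1*(T*s))| ≤ K2*(T^2*s) := by
      have d1 : |w - ((r/2)*v + (r^3/24)*v^3)| ≤ (3*r/4*C)^5*(T^2*s) := by
        have p1 : w^5 ≤ ((3*r/4*C)*s)^5 := pow_le_pow_left₀ hw0.le hwup 5
        have p2 : ((3*r/4*C)*s)^5 = (3*r/4*C)^5*(T^2*s) := by rw [mul_pow, h5s]
        linarith [hw5]
      have d2 : |v - (b1*s + b3*(T*s))| ≤ K*(T^2*s) := hVb'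
      have d3 : |v^3 - b1^3*(T*s)| ≤ 3*C^2*(K + |b3|)*(T^2*s) := by
        have hb1s : (0:ℝ) ≤ b1*s := by positivity
        have hb1sC : b1*s ≤ C*s := mul_le_mul_of_nonneg_right hb1C hs0.le
        have hvb : |v - b1*s| ≤ (K + |b3|)*(T*s) := by
          have g1 : |v - b1*s| ≤ |v - (b1*s + b3*(T*s))| + |(b1*s + b3*(T*s)) - b1*s| :=
            abs_sub_le v (b1*s + b3*(T*s)) (b1*s)
          have g15 : (b1*s + b3*(T*s)) - b1*s = b3*(T*s) := by ring
          rw [g15] at g1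
          have g2 : |b3*(T*s)| = |b3| * (T*s) := by
            rw [abs_mul, abs_of_nonneg (by positivity : (0:ℝ) ≤ T*s)]
          have g3 : K*(T^2*s) ≤ K*(T*s) := mul_le_mul_of_nonneg_left t2 hK0
          rw [g2] at g1
          have g4 : |v - (b1*s + b3*(T*s))| ≤ K*(T*s) := le_trans d2 g3
          have e : (K + |b3|)*(T*s) = K*(T*s) + |b3| * (T*s) := by ring
          linarith
        have hfac : v^3 - (b1*s)^3 = (v - b1*s)*(v^2 + v*(b1*s) + (b1*s)^2) := by ring
        have hquad : v^2 + v*(b1*s) + (b1*s)^2 ≤ 3*(C^2*T) := by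
          have q1 : v^2 ≤ (C*s)^2 := pow_le_pow_left₀ hv0.le hvC 2
          have q2 : v*(b1*s) ≤ (C*s)^2 := by
            have h := mul_le_mul hvC hb1sC hb1s (by positivity : (0:ℝ) ≤ C*s)
            have e : (C*s)*(C*s) = (C*s)^2 := by ring
            linarith
          have q3 : (b1*s)^2 ≤ (C*s)^2 := pow_le_pow_left₀ hb1s hb1sC 2
          have q4 : (C*s)^2 = C^2*T := by rw [mul_pow, hTs]
          linarith
        have hquad0 : (0:ℝ) ≤ v^2 + v*(b1*s) + (b1*s)^2 := by positivity
        have habs3 : |v^3 - (b1*s)^3| ≤ ((K + |b3|)*(T*s))*(3*(C^2*T)) := by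
          rw [hfac, abs_mul]
          apply mul_le_mul hvb _ (abs_nonneg _) (by positivity)
          rw [abs_of_nonneg hquad0]
          exact hquad
        have e1' : (b1*s)^3 = b1^3*(T*s) := by rw [mul_pow, h3s]
        have e2' : ((K + |b3|)*(T*s))*(3*(C^2*T)) = 3*C^2*(K + |b3|)*(T^2*s) := by ring
        rw [e1', e2'] at habs3
        exact habs3
      have key : w - (e0*s + e1*(T*s))
          = (w - ((r/2)*v + (r^3/24)*v^3)) + (r/2)*(v - (b1*s + b3*(T*s)))
            + (r^3/24)*(v^3 - b1^3*(T*s)) := by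
        rw [he0def, he1def]; ring
      have m2 : |(r/2)*(v - (b1*s + b3*(T*s)))| ≤ (r/2)*(K*(T^2*s)) := by
        rw [abs_mul, abs_of_nonneg (by positivity : (0:ℝ) ≤ r/2)]
        exact mul_le_mul_of_nonneg_left d2 (by positivity)
      have m3 : |(r^3/24)*(v^3 - b1^3*(T*s))| ≤ (r^3/24)*(3*C^2*(K + |b3|)*(T^2*s)) := by
        rw [abs_mul, abs_of_nonneg (by positivity : (0:ℝ) ≤ r^3/24)]
        exact mul_le_mul_of_nonneg_left d3 (by positivity)
      have tri : |w - (e0*s + e1*(T*s))| ≤ |w - ((r/2)*v + (r^3/24)*v^3)|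
          + |(r/2)*(v - (b1*s + b3*(T*s)))| + |(r^3/24)*(v^3 - b1^3*(T*s))| := by
        rw [key]
        exact le_trans (abs_add_le _ _) (by linarith [abs_add_le (w - ((r/2)*v + (r^3/24)*v^3)) ((r/2)*(v - (b1*s + b3*(T*s))))])
      have efin : K2*(T^2*s) = (3*r/4*C)^5*(T^2*s) + (r/2)*(K*(T^2*s))
          + (r^3/24)*(3*C^2*(K + |b3|)*(T^2*s)) := by rw [hK2def]; ring
      linarith
    -- convert to sigAtm
    have esplit : q*e0 + q*e1*T = q/s*(e0*s + e1*(T*s)) := by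
      field_simp [hsne]
    rw [hsig, esplit, ← mul_sub, abs_mul, abs_of_nonneg (by positivity : (0:ℝ) ≤ q/s)]
    have efin2 : q/s*(K2*(T^2*s)) = q*K2*T^2 := by field_simp [hsne]
    calc q/s * |w - (e0*s + e1*(T*s))| ≤ q/s*(K2*(T^2*s)) :=
        mul_le_mul_of_nonneg_left hwT (by positivity)
      _ = q*K2*T^2 := efin2
  -- closed forms for the output constants
  clear_value q r b1 b3 C e0 e1 K2
  have hc0 : q*e0 = 2*σm*σp/(σm+σp) := by
    have h1 : q*e0 = q^2*(σm*σp/(4*(σm+σp))) := by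
      rw [he0def, hb1]
      field_simp [hqpos.ne', hrpos.ne', hsum.ne']
      ring
    rw [h1, hq2]
    field_simp
    ring
  have hc1 : q*e1 = -((σm*σp)^2*(σm-σp)^2/(12*(σm+σp)^3)) := by
    have hq4 : q^4 = 64 := by
      rw [show q^4 = (q^2)^2 from by ring, hq2]; norm_num
    have h1 : q*e1 = -(σm^2*σp^2)/(12*(σm+σp)) + q^4*(σm^3*σp^3/(192*(σm+σp)^3)) := by
      rw [he1def, hb1, hb3]
      field_simp [hqpos.ne', hrpos.ne', hsum.ne']
      ring
    rw [h1, hq4]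
    field_simp
    ring
  -- final assembly
  have claim2 : (fun T : ℝ => sigAtm σp σm T -
      (2 * σm * σp / (σm + σp)
        - (σm * σp) ^ 2 * (σm - σp) ^ 2 / (12 * (σm + σp) ^ 3) * T))
      =o[𝓝[>] 0] fun T : ℝ => T := by
    have hrw : ∀ T : ℝ, 2 * σm * σp / (σm + σp)
        - (σm * σp) ^ 2 * (σm - σp) ^ 2 / (12 * (σm + σp) ^ 3) * T = q*e0 + q*e1*T := by
      intro T
      rw [hc0, hc1]
      ring
    rw [Asymptotics.isLittleO_iff]
    intro c hc
    have evc : ∀ᶠ T in 𝓝[>] (0:ℝ), T ∈ Set.Ioc (0:ℝ) (c/(q*K2+1)) :=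
      Ioc_mem_nhdsGT_of_mem (Set.left_mem_Ico.2 (by positivity))
    filter_upwards [main_ev, evc] with T hmain hTc
    obtain ⟨hT0, hTc'⟩ := hTc
    rw [hrw T]
    have b1' : q*K2*T^2 ≤ c*T := by
      have h1 : q*K2*T ≤ (q*K2+1)*T :=
        mul_le_mul_of_nonneg_right (by linarith) hT0.le
      have h2 : (q*K2+1)*T ≤ c := by
        have hpos : (0:ℝ) < q*K2+1 := by positivity
        rw [le_div_iff₀ hpos] at hTc'
        linarith [hTc']
      have h3 : (q*K2*T)*T ≤ c*T := by
        apply mul_le_mul_of_nonneg_right _ hT0.le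
        calc q*K2*T ≤ (q*K2+1)*T := h1
          _ ≤ c := h2
      have e : (q*K2*T)*T = q*K2*T^2 := by ring
      linarith
    calc |sigAtm σp σm T - (q*e0 + q*e1*T)| ≤ q*K2*T^2 := hmain
      _ ≤ c*T := b1'
      _ = c*‖T‖ := by rw [Real.norm_eq_abs, abs_of_pos hT0]
  refine ⟨?_, claim2⟩
  have hzero : Tendsto (fun T : ℝ => T) (𝓝[>] (0:ℝ)) (𝓝 0) := by
    have : Tendsto (fun T : ℝ => T) (𝓝 (0:ℝ)) (𝓝 0) := tendsto_id
    exact this.mono_left nhdsWithin_le_nhds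
  have hdiff := claim2.trans_tendsto hzero
  have hconst : Tendsto (fun T : ℝ => 2 * σm * σp / (σm + σp)
      - (σm * σp) ^ 2 * (σm - σp) ^ 2 / (12 * (σm + σp) ^ 3) * T) (𝓝[>] (0:ℝ))
      (𝓝 (2 * σm * σp / (σm + σp))) := by
    have : Tendsto (fun T : ℝ => 2 * σm * σp / (σm + σp)
        - (σm * σp) ^ 2 * (σm - σp) ^ 2 / (12 * (σm + σp) ^ 3) * T) (𝓝 (0:ℝ))
        (𝓝 (2 * σm * σp / (σm + σp))) := by
      have hcont : Continuous (fun T : ℝ => 2 * σm * σp / (σm + σp)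
          - (σm * σp) ^ 2 * (σm - σp) ^ 2 / (12 * (σm + σp) ^ 3) * T) := by
        fun_prop
      have := hcont.tendsto (0:ℝ)
      simpa using this
    exact this.mono_left nhdsWithin_le_nhds
  have := hdiff.add hconst
  simp only [sub_add_cancel, zero_add] at this
  exact this
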